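/- arXiv:2210.07835 — 4 statements merged into one kernel-verified Lean document; each statement's English description precedes it below -/
import Mathlib

section
/- Let k ≥ 2 and let G be a complete k-partite graph in which every partition class has at least three vertices. Then μ(G) = μt(G). -/
open SimpleGraph

/-- Vertices `x` and `y` are `X`-visible in `G`: some shortest `x,y`-path has
no internal vertex in `X`. -/
def Visible {V : Type*} (G : SimpleGraph V) (X : Set V) (x y : V) : Prop :=
  ∃ p : G.Walk x y, p.length = G.dist x y ∧ ∀ v ∈ p.support, v ∈ X → v = x ∨ v = y

/-- `X` is a mutual-visibility set of `G`: every two vertices of `X` are `X`-visible. -/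
def IsMVSet {V : Type*} (G : SimpleGraph V) (X : Set V) : Prop :=
  ∀ x ∈ X, ∀ y ∈ X, Visible G X x y

/-- `X` is a total mutual-visibility set of `G`: every two vertices of `G` are
`X`-visible. -/
def IsTMVSet {V : Type*} (G : SimpleGraph V) (X : Set V) : Prop :=
  ∀ x y : V, Visible G X x y

/-- The mutual-visibility number of `G`: the maximum cardinality of a
mutual-visibility set. -/
noncomputable def mu {V : Type*} (G : SimpleGraph V) : ℕ :=
  sSup {n | ∃ X : Set V, IsMVSet G X ∧ X.ncard = n}

/-- The total mutual-visibility number of `G`: the maximum cardinality of a total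
mutual-visibility set. -/
noncomputable def muT {V : Type*} (G : SimpleGraph V) : ℕ :=
  sSup {n | ∃ X : Set V, IsTMVSet G X ∧ X.ncard = n}

/-- A feasible total mutual-visibility set: a total mutual-visibility set `S` such that
any two adjacent vertices of `S` have a common neighbor outside `S`. -/
def IsFeasibleTMVSet {V : Type*} (G : SimpleGraph V) (S : Set V) : Prop :=
  IsTMVSet G S ∧ ∀ x ∈ S, ∀ y ∈ S, G.Adj x y → ∃ z ∉ S, G.Adj x z ∧ G.Adj y z

/-- The strong product of two simple graphs. -/
def strongProd {α β : Type*} (G : SimpleGraph α) (H : SimpleGraph β) :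
    SimpleGraph (α × β) where
  Adj x y := (G.Adj x.1 y.1 ∧ x.2 = y.2) ∨ (x.1 = y.1 ∧ H.Adj x.2 y.2) ∨
    (G.Adj x.1 y.1 ∧ H.Adj x.2 y.2)
  symm := by
    constructor
    rintro ⟨a, b⟩ ⟨c, d⟩ (⟨h1, h2⟩ | ⟨h1, h2⟩ | ⟨h1, h2⟩)
    · exact Or.inl ⟨h1.symm, h2.symm⟩
    · exact Or.inr (Or.inl ⟨h1.symm, h2.symm⟩)
    · exact Or.inr (Or.inr ⟨h1.symm, h2.symm⟩)
  loopless := by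
    constructor
    rintro ⟨a, b⟩ (⟨h, _⟩ | ⟨_, h⟩ | ⟨h, _⟩)
    · exact G.loopless.irrefl a h
    · exact H.loopless.irrefl b h
    · exact G.loopless.irrefl a h

/-- The iterated (associative) strong product of a finite family of graphs:
two tuples are adjacent iff they are distinct and agree or are adjacent in every
coordinate. -/
def strongProdPi {k : ℕ} {V : Fin k → Type*} (G : ∀ i, SimpleGraph (V i)) :
    SimpleGraph (∀ i, V i) where
  Adj x y := x ≠ y ∧ ∀ i, x i = y i ∨ (G i).Adj (x i) (y i)
  symm := by
    constructor
    rintro x y ⟨hne, h⟩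
    exact ⟨hne.symm, fun i => (h i).imp Eq.symm fun hh => (G i).symm.symm _ _ hh⟩
  loopless := ⟨fun x h => h.1 rfl⟩

/-- A universal vertex: adjacent to all other vertices. -/
def IsUniversal {V : Type*} (G : SimpleGraph V) (v : V) : Prop :=
  ∀ u : V, u ≠ v → G.Adj v u

/-- A cut vertex: its removal disconnects the graph. -/
def IsCutVertex {V : Type*} (G : SimpleGraph V) (v : V) : Prop :=
  ¬ (G.induce ({v}ᶜ : Set V)).Preconnected

/-- An induced path: a path with no chords between its vertices. -/
def IsInducedPath {V : Type*} (G : SimpleGraph V) {u v : V} (p : G.Walk u v) : Prop :=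
  p.IsPath ∧ ∀ a b : V, a ∈ p.support → b ∈ p.support → G.Adj a b → s(a, b) ∈ p.edges

/-- A block graph: a connected graph in which every pair of vertices is joined
by a unique induced path. -/
def IsBlockGraph {V : Type*} (G : SimpleGraph V) : Prop :=
  G.Connected ∧ ∀ u v : V, ∃! p : G.Walk u v, IsInducedPath G p

/-- A convex set of vertices: every shortest path of `G` between two of its
vertices stays inside the set. -/
def IsConvexSet {V : Type*} (G : SimpleGraph V) (A : Set V) : Prop :=
  ∀ x ∈ A, ∀ y ∈ A, ∀ p : G.Walk x y, p.length = G.dist x y → ∀ v ∈ p.support, v ∈ A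

/-- A cactus graph: a connected graph in which every edge lies in at most one cycle,
i.e. two cycles sharing an edge have the same edge set. -/
def IsCactus {V : Type*} (G : SimpleGraph V) : Prop :=
  G.Connected ∧ ∀ (v : V) (p q : G.Walk v v), p.IsCycle → q.IsCycle →
    ∀ e, e ∈ p.edges → e ∈ q.edges → ∀ e', e' ∈ p.edges ↔ e' ∈ q.edges

/-- A cograph: obtained from a single vertex by repeatedly adding twins, i.e. there is
an enumeration of the vertices in which every vertex except the first is, at the
moment of its addition, a (true or false) twin of some earlier vertex in the induced
subgraph on the vertices added so far. -/
def IsCograph {V : Type*} (G : SimpleGraph V) : Prop :=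
  ∃ l : List V, l.Nodup ∧ (∀ v : V, v ∈ l) ∧
    ∀ i : Fin l.length, (i : ℕ) ≠ 0 →
      ∃ j : Fin l.length, (j : ℕ) < (i : ℕ) ∧
        ∀ z ∈ l.take ((i : ℕ) + 1), z ≠ l.get i → z ≠ l.get j →
          (G.Adj (l.get i) z ↔ G.Adj (l.get j) z)

/-- An enabling vertex: a vertex `v` adjacent to every vertex `u` of `G - v` whose
degree in `G - v` is less than `n(G) - 2`. -/
def IsEnabling {V : Type*} [Fintype V] (G : SimpleGraph V) (v : V) : Prop :=
  ∀ u : V, u ≠ v → (G.neighborSet u \ {v}).ncard < Fintype.card V - 2 → G.Adj v u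

/-!
In a complete multipartite graph with at least two parts, vertices in different parts are
adjacent and two distinct vertices of the same part are at distance two, joined through any
vertex of another part. Deleting one vertex from each of two different parts therefore leaves
a total mutual-visibility set of size `n - 2`. Conversely, a mutual-visibility set `X` missing
at most one vertex `z` would contain two further vertices of the part of `z`; their shortest
paths have a middle vertex from another part, which would have to lie outside `X`. Hence
`n - 2` is the largest size of a mutual-visibility set as well.
-/

namespace SimpleGraph

variable {V : Type*} {G : SimpleGraph V} {X : Set V} {x y w : V}

theorem dist_eq_two_of_adj_of_adj (hxy : x ≠ y) (hn : ¬G.Adj x y) (hxw : G.Adj x w)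
    (hwy : G.Adj w y) : G.dist x y = 2 := by
  rw [dist, ENat.toNat_eq_iff two_ne_zero, Nat.cast_ofNat, edist_eq_two_iff]
  exact ⟨hxy, hn, w, hxw, hwy.symm⟩

theorem visible_self (G : SimpleGraph V) (X : Set V) (x : V) : Visible G X x x :=
  ⟨.nil, by simp, by simp⟩

theorem visible_of_adj (h : G.Adj x y) : Visible G X x y :=
  ⟨h.toWalk, by simp [dist_eq_one_iff_adj.2 h], by simp⟩

theorem visible_of_adj_of_adj (hxy : x ≠ y) (hn : ¬G.Adj x y) (hxw : G.Adj x w)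
    (hwy : G.Adj w y) (hw : w ∉ X) : Visible G X x y := by
  refine ⟨.cons hxw (.cons hwy .nil), by simp [dist_eq_two_of_adj_of_adj hxy hn hxw hwy], ?_⟩
  simp only [Walk.support_cons, Walk.support_nil, List.mem_cons, List.not_mem_nil, or_false]
  rintro v (rfl | rfl | rfl) hv
  exacts [Or.inl rfl, absurd hv hw, Or.inr rfl]

theorem Visible.exists_adj_notMem (h : Visible G X x y) (hxy : x ≠ y) (hn : ¬G.Adj x y) :
    ∃ w ∉ X, G.Adj x w := by
  obtain ⟨p, -, hp⟩ := h
  cases p with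
  | nil => exact absurd rfl hxy
  | @cons _ w _ hxw q =>
    refine ⟨w, fun hw => ?_, hxw⟩
    rcases hp w (by simp [q.start_mem_support]) hw with rfl | rfl
    exacts [G.loopless.irrefl _ hxw, hn hxw]

theorem IsTMVSet.isMVSet (h : IsTMVSet G X) : IsMVSet G X :=
  fun x _ y _ => h x y

theorem mu_eq_muT_of_isTMVSet (hX : IsTMVSet G X)
    (hmax : ∀ Y : Set V, IsMVSet G Y → Y.ncard ≤ X.ncard) : mu G = muT G := by
  have hmu : mu G = X.ncard :=
    IsGreatest.csSup_eq ⟨⟨X, hX.isMVSet, rfl⟩, by rintro _ ⟨Y, hY, rfl⟩; exact hmax Y hY⟩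
  have hmuT : muT G = X.ncard :=
    IsGreatest.csSup_eq ⟨⟨X, hX, rfl⟩, by rintro _ ⟨Y, hY, rfl⟩; exact hmax Y hY.isMVSet⟩
  rw [hmu, hmuT]

section Multipartite

variable {ι : Type*} {f : V → ι}

theorem isTMVSet_compl_pair_of_multipartite (hadj : ∀ u v, G.Adj u v ↔ f u ≠ f v) {a b : V}
    (hab : f a ≠ f b) : IsTMVSet G {a, b}ᶜ := by
  intro x y
  obtain rfl | hxy := eq_or_ne x y
  · exact visible_self G _ x
  by_cases hf : f x = f y
  · obtain ⟨c, hc, hcx⟩ : ∃ c ∈ ({a, b} : Set V), f c ≠ f x := by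
      by_cases hax : f a = f x
      · exact ⟨b, by simp, hax ▸ hab.symm⟩
      · exact ⟨a, by simp, hax⟩
    exact visible_of_adj_of_adj hxy (fun h => (hadj x y).1 h hf) ((hadj x c).2 hcx.symm)
      ((hadj c y).2 (hf ▸ hcx)) (not_not_intro hc)
  · exact visible_of_adj ((hadj x y).2 hf)

theorem IsMVSet.exists_notMem_of_multipartite (hadj : ∀ u v, G.Adj u v ↔ f u ≠ f v)
    (hX : IsMVSet G X) (hx : x ∈ X) (hy : y ∈ X) (hxy : x ≠ y) (hf : f x = f y) :
    ∃ w ∉ X, f w ≠ f x := by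
  obtain ⟨w, hw, hxw⟩ := (hX x hx y hy).exists_adj_notMem hxy fun h => (hadj x y).1 h hf
  exact ⟨w, hw, ((hadj x w).1 hxw).symm⟩

theorem ncard_le_card_sub_two_of_multipartite [Fintype V] [Nonempty V]
    (hadj : ∀ u v, G.Adj u v ↔ f u ≠ f v) (hcard : ∀ i, 3 ≤ {v | f v = i}.ncard)
    (hX : IsMVSet G X) : X.ncard ≤ Fintype.card V - 2 := by
  by_contra! hlt
  have hcompl : Xᶜ.ncard ≤ 1 := by
    have := Set.ncard_add_ncard_compl X
    rw [Nat.card_eq_fintype_card] at this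
    omega
  obtain ⟨z, hz⟩ := (Set.ncard_le_one_iff_subset_singleton).1 hcompl
  have hpart : 1 < ({v | f v = f z} \ {z}).ncard := by
    rw [Set.ncard_sdiff_singleton_of_mem (show z ∈ {v | f v = f z} from rfl)]
    have := hcard (f z)
    omega
  have hsub : {v | f v = f z} \ {z} ⊆ X := fun v hv => by_contra fun hvX => hv.2 (hz hvX)
  obtain ⟨x, y, hx, hy, hxy⟩ := (Set.one_lt_ncard_iff).1 hpart
  obtain ⟨w, hw, hwx⟩ :=
    hX.exists_notMem_of_multipartite hadj (hsub hx) (hsub hy) hxy (hx.1.trans hy.1.symm)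
  exact hwx ((congrArg f (hz hw)).trans hx.1.symm)

end Multipartite

end SimpleGraph

theorem stmt_5 {V : Type*} [Fintype V] (G : SimpleGraph V) {k : ℕ} (hk : 2 ≤ k)
    (f : V → Fin k) (hadj : ∀ u v : V, G.Adj u v ↔ f u ≠ f v)
    (hcard : ∀ i : Fin k, 3 ≤ {v | f v = i}.ncard) :
    mu G = muT G := by
  have hpart (i : Fin k) : ∃ v, f v = i :=
    Set.nonempty_of_ncard_ne_zero (s := {v | f v = i}) (by have := hcard i; omega)
  obtain ⟨a, ha⟩ := hpart ⟨0, by omega⟩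
  obtain ⟨b, hb⟩ := hpart ⟨1, by omega⟩
  have hab : f a ≠ f b := by simp [ha, hb]
  have : Nonempty V := ⟨a⟩
  have hpair : ({a, b} : Set V)ᶜ.ncard = Fintype.card V - 2 := by
    rw [Set.ncard_compl, Set.ncard_pair (ne_of_apply_ne f hab), Nat.card_eq_fintype_card]
  refine mu_eq_muT_of_isTMVSet (isTMVSet_compl_pair_of_multipartite hadj hab) fun Y hY => ?_
  exact hpair ▸ ncard_le_card_sub_two_of_multipartite hadj hcard hY
end

section
/- Let k ≥ 2 and let G_1, …, G_k be finite connected non-complete simple graphs, each admitting a feasible maximum total mutual-visibility set. Then for the iterated strong product H_k = G_1 ⊠ G_2 ⊠ ⋯ ⊠ G_k it holds that μt(H_k) ≥ ∏_{i=1}^k n(G_i) − ∏_{i=1}^k (n(G_i) − μt(G_i)). -/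
open SimpleGraph

/-!
Let `S i` be a feasible maximum total mutual-visibility set of `G i` and let `T` be the set of
tuples with some coordinate `x i ∈ S i`; its complement is `∏ i, (S i)ᶜ`, which gives the count.
For `x, y` in the product, `L = maxᵢ d(x i, y i)` is their distance. In each coordinate, go from
`x i` to `y i` in exactly `L` steps, each step staying put or moving along an edge, with no
interior point in `S i`: follow a shortest path whose interior avoids `S i` and pause at an
interior vertex, or, if `d(x i, y i) ≤ 1`, pause at a vertex `z ∉ S i` equal or adjacent to both
ends; `z` exists by feasibility when `x i, y i ∈ S i` are adjacent, and since `G i` is not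
complete when `x i = y i ∈ S i`. Running all coordinates together gives a shortest `x,y`-walk of
the product whose interior misses `T`.
-/

namespace SimpleGraph

variable {V : Type*} {G : SimpleGraph V}

def IsLazyWalk (G : SimpleGraph V) (f : ℕ → V) (L : ℕ) : Prop :=
  ∀ j < L, Relation.ReflGen G.Adj (f j) (f (j + 1))

theorem Walk.isLazyWalk_getVert {u v : V} (p : G.Walk u v) : G.IsLazyWalk p.getVert p.length :=
  fun _ hj => .single (p.adj_getVert_succ hj)

theorem Walk.reflGen_of_length_le_one {u v : V} (p : G.Walk u v) (hp : p.length ≤ 1) :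
    Relation.ReflGen G.Adj u v := by
  rcases Nat.le_one_iff_eq_zero_or_eq_one.1 hp with h | h
  · exact Walk.eq_of_length_eq_zero h ▸ .refl
  · exact .single (Walk.adj_of_length_eq_one h)

theorem two_le_dist_of_not_reflGen {u v : V} (huv : G.Reachable u v)
    (h : ¬Relation.ReflGen G.Adj u v) : 2 ≤ G.dist u v := by
  obtain ⟨p, hp⟩ := huv.exists_walk_length_eq_dist
  by_contra! hlt
  exact h (p.reflGen_of_length_le_one (by omega))

theorem IsLazyWalk.exists_walk {f : ℕ → V} :
    ∀ {L : ℕ}, G.IsLazyWalk f L →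
      ∃ p : G.Walk (f 0) (f L), p.length ≤ L ∧ ∀ v ∈ p.support, ∃ j ≤ L, f j = v
  | 0, _ => ⟨.nil, le_rfl, by simp⟩
  | L + 1, hf => by
    obtain ⟨p, hpL, hpf⟩ := exists_walk (L := L) fun j hj => hf j (by omega)
    rcases (Relation.reflGen_iff _ _ _).1 (hf L L.lt_succ_self) with heq | hadj
    · refine ⟨p.copy rfl heq.symm, by rw [Walk.length_copy]; omega, fun v hv => ?_⟩
      rw [Walk.support_copy] at hv
      exact (hpf v hv).imp fun j hj => ⟨by omega, hj.2⟩
    · refine ⟨p.concat hadj, by simp [hpL], fun v hv => ?_⟩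
      simp only [Walk.support_concat, List.mem_append, List.mem_singleton] at hv
      rcases hv with hv | rfl
      · exact (hpf v hv).imp fun j hj => ⟨by omega, hj.2⟩
      · exact ⟨L + 1, le_rfl, rfl⟩

/-- Reparametrize by pausing `L - ℓ` steps at the interior position `m`. -/
theorem IsLazyWalk.exists_stretch {f : ℕ → V} {ℓ : ℕ} (hf : G.IsLazyWalk f ℓ) {L m : ℕ}
    (hℓL : ℓ ≤ L) (hm : 0 < m) (hmℓ : m < ℓ) :
    ∃ g : ℕ → V, g 0 = f 0 ∧ g L = f ℓ ∧ G.IsLazyWalk g L ∧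
      ∀ j, 0 < j → j < L → ∃ i, 0 < i ∧ i < ℓ ∧ g j = f i := by
  refine ⟨fun j => f (j - min (L - ℓ) (j - m)), by simp, by dsimp only; congr 1; omega,
    fun j hj => ?_, fun j hj0 hjL => ⟨_, by omega, by omega, rfl⟩⟩
  rcases (by omega : j + 1 - min (L - ℓ) (j + 1 - m) = j - min (L - ℓ) (j - m) ∨
      (j + 1 - min (L - ℓ) (j + 1 - m) = j - min (L - ℓ) (j - m) + 1 ∧
        j - min (L - ℓ) (j - m) < ℓ)) with h | ⟨h, hlt⟩
  · simp only [h]; exact .refl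
  · simp only [h]; exact hf _ hlt

end SimpleGraph

section Visibility

variable {V : Type*} {G : SimpleGraph V}

theorem visible_of_reflGen (X : Set V) {x y : V} (h : Relation.ReflGen G.Adj x y) :
    Visible G X x y := by
  cases h with
  | refl => exact ⟨.nil, by simp, by simp⟩
  | single hxy => exact ⟨hxy.toWalk, by simp [dist_eq_one_iff_adj.2 hxy], by simp⟩

theorem Visible.exists_walk_getVert_notMem {X : Set V} {x y : V} (h : Visible G X x y) :
    ∃ p : G.Walk x y, p.length = G.dist x y ∧
      ∀ i, 0 < i → i < p.length → p.getVert i ∉ X := by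
  obtain ⟨p, hp, hX⟩ := h
  have hpath := p.isPath_of_length_eq_dist hp
  refine ⟨p, hp, fun i hi0 hi hiX => ?_⟩
  rcases hX _ (p.getVert_mem_support i) hiX with h | h
  · exact hi0.ne' ((hpath.getVert_eq_start_iff hi.le).1 h)
  · exact hi.ne ((hpath.getVert_eq_end_iff hi.le).1 h)

theorem IsTMVSet.exists_adj_notMem_of_not_reflGen {S : Set V} (hS : IsTMVSet G S) {u w : V}
    (huw : ¬Relation.ReflGen G.Adj u w) : ∃ z ∉ S, G.Adj u z := by
  obtain ⟨p, hp, hpS⟩ := (hS u w).exists_walk_getVert_notMem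
  have h2 : 2 ≤ p.length := hp ▸ two_le_dist_of_not_reflGen ⟨p⟩ huw
  exact ⟨p.getVert 1, hpS 1 one_pos h2, by simpa using p.adj_getVert_succ (i := 0) (by omega)⟩

theorem IsTMVSet.exists_adj_notMem {S : Set V} (hS : IsTMVSet G S) (hG : G ≠ ⊤) {x : V}
    (hx : x ∈ S) : ∃ z ∉ S, G.Adj x z := by
  by_cases hx_univ : ∀ u, Relation.ReflGen G.Adj x u
  · obtain ⟨u, w, huw⟩ : ∃ u w, ¬Relation.ReflGen G.Adj u w := by
      contrapose! hG
      ext u w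
      rw [top_adj]
      exact ⟨Adj.ne, fun huw => ((Relation.reflGen_iff _ _ _).1 (hG u w)).resolve_left huw.symm⟩
    obtain ⟨z, hz, -⟩ := hS.exists_adj_notMem_of_not_reflGen huw
    obtain rfl | hxz := (Relation.reflGen_iff _ _ _).1 (hx_univ z)
    · exact absurd hx hz
    · exact ⟨z, hz, hxz⟩
  · obtain ⟨u, hu⟩ := not_forall.1 hx_univ
    exact hS.exists_adj_notMem_of_not_reflGen hu

theorem IsFeasibleTMVSet.exists_notMem_reflGen {S : Set V} (hS : IsFeasibleTMVSet G S)
    (hG : G ≠ ⊤) {x y : V} (hxy : Relation.ReflGen G.Adj x y) :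
    ∃ z ∉ S, Relation.ReflGen G.Adj x z ∧ Relation.ReflGen G.Adj z y := by
  by_cases hx : x ∈ S
  swap
  · exact ⟨x, hx, .refl, hxy⟩
  by_cases hy : y ∈ S
  swap
  · exact ⟨y, hy, hxy, .refl⟩
  cases hxy with
  | refl =>
    obtain ⟨z, hz, hxz⟩ := hS.1.exists_adj_notMem hG hx
    exact ⟨z, hz, .single hxz, .single hxz.symm⟩
  | single hxy =>
    obtain ⟨z, hz, hxz, hyz⟩ := hS.2 x hx y hy hxy
    exact ⟨z, hz, .single hxz, .single hyz.symm⟩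

theorem IsFeasibleTMVSet.exists_isLazyWalk {S : Set V} (hS : IsFeasibleTMVSet G S)
    (hG : G ≠ ⊤) (x y : V) {L : ℕ} (hL : 2 ≤ L) (hd : G.dist x y ≤ L) :
    ∃ f : ℕ → V, f 0 = x ∧ f L = y ∧ G.IsLazyWalk f L ∧ ∀ j, 0 < j → j < L → f j ∉ S := by
  obtain ⟨p, hp, hpS⟩ := (hS.1 x y).exists_walk_getVert_notMem
  by_cases hp2 : 2 ≤ p.length
  · obtain ⟨g, hg0, hgL, hg, hgS⟩ :=
      p.isLazyWalk_getVert.exists_stretch (L := L) (by omega) one_pos hp2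
    refine ⟨g, by simpa using hg0, by simpa using hgL, hg, fun j hj0 hjL => ?_⟩
    obtain ⟨i, hi0, hi, hgj⟩ := hgS j hj0 hjL
    exact hgj ▸ hpS i hi0 hi
  · obtain ⟨z, hz, hxz, hzy⟩ :=
      hS.exists_notMem_reflGen hG (p.reflGen_of_length_le_one (by omega))
    let f : ℕ → V := fun j => if j = 0 then x else if j = 1 then z else y
    have hf : G.IsLazyWalk f 2 := by
      intro j hj
      interval_cases j
      · exact hxz
      · exact hzy
    obtain ⟨g, hg0, hgL, hg, hgS⟩ := hf.exists_stretch hL one_pos one_lt_two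
    refine ⟨g, hg0, hgL, hg, fun j hj0 hjL => ?_⟩
    obtain ⟨i, hi0, hi, hgj⟩ := hgS j hj0 hjL
    obtain rfl : i = 1 := by omega
    exact hgj ▸ hz

end Visibility

theorem IsTMVSet.ncard_le_muT {V : Type*} [Finite V] {G : SimpleGraph V} {X : Set V}
    (hX : IsTMVSet G X) : X.ncard ≤ muT G :=
  le_csSup ⟨Nat.card V, by rintro _ ⟨Y, -, rfl⟩; exact Y.ncard_le_card⟩ ⟨X, hX, rfl⟩

theorem ncard_setOf_exists_mem {ι : Type*} [Fintype ι] {V : ι → Type*} [∀ i, Fintype (V i)]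
    (S : ∀ i, Set (V i)) :
    {x : ∀ i, V i | ∃ i, x i ∈ S i}.ncard =
      ∏ i, Fintype.card (V i) - ∏ i, (Fintype.card (V i) - (S i).ncard) := by
  have hcompl : {x : ∀ i, V i | ∃ i, x i ∈ S i} = (Set.univ.pi fun i => (S i)ᶜ)ᶜ := by
    ext x
    simp
  rw [hcompl, Set.ncard_compl, ← Nat.card_coe_set_eq (Set.univ.pi _),
    Nat.card_congr (Equiv.Set.univPi _), Nat.card_pi, Nat.card_pi]
  simp only [Nat.card_coe_set_eq, Nat.card_eq_fintype_card]
  congr 1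
  exact Finset.prod_congr rfl fun i _ => by rw [Set.ncard_compl, Nat.card_eq_fintype_card]

section StrongProdPi

variable {k : ℕ} {V : Fin k → Type*} (G : ∀ i, SimpleGraph (V i))

theorem reflGen_strongProdPi_adj_iff {x y : ∀ i, V i} :
    Relation.ReflGen (strongProdPi G).Adj x y ↔ ∀ i, Relation.ReflGen (G i).Adj (x i) (y i) := by
  simp only [Relation.reflGen_iff]
  constructor
  · rintro (rfl | ⟨-, h⟩) i
    · exact Or.inl rfl
    · exact (h i).imp Eq.symm id
  · intro h
    by_cases hyx : y = x
    · exact Or.inl hyx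
    · exact Or.inr ⟨Ne.symm hyx, fun i => (h i).imp Eq.symm id⟩

theorem isLazyWalk_strongProdPi_iff {F : ℕ → ∀ i, V i} {L : ℕ} :
    (strongProdPi G).IsLazyWalk F L ↔ ∀ i, (G i).IsLazyWalk (fun j => F j i) L := by
  simp only [IsLazyWalk, reflGen_strongProdPi_adj_iff]
  exact ⟨fun h i j hj => h j hj i, fun h j hj i => h i j hj⟩

theorem dist_le_dist_strongProdPi {x y : ∀ i, V i} (hxy : (strongProdPi G).Reachable x y)
    (i : Fin k) : (G i).dist (x i) (y i) ≤ (strongProdPi G).dist x y := by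
  obtain ⟨q, hq⟩ := hxy.exists_walk_length_eq_dist
  obtain ⟨p, hp, -⟩ := ((isLazyWalk_strongProdPi_iff G).1 q.isLazyWalk_getVert i).exists_walk
  have := dist_le p
  simp only [Walk.getVert_zero, Walk.getVert_length] at this
  omega

theorem isTMVSet_strongProdPi {S : ∀ i, Set (V i)} (hS : ∀ i, IsFeasibleTMVSet (G i) (S i))
    (hG : ∀ i, G i ≠ ⊤) : IsTMVSet (strongProdPi G) {x | ∃ i, x i ∈ S i} := by
  intro x y
  by_cases hxy : Relation.ReflGen (strongProdPi G).Adj x y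
  · exact visible_of_reflGen _ hxy
  obtain ⟨i₀, hi₀⟩ := not_forall.1 (mt (reflGen_strongProdPi_adj_iff G).2 hxy)
  obtain ⟨i₁, -, hi₁⟩ := Finset.univ.exists_mem_eq_sup ⟨i₀, Finset.mem_univ _⟩
    fun i => (G i).dist (x i) (y i)
  set L := (G i₁).dist (x i₁) (y i₁)
  have hdL : ∀ i, (G i).dist (x i) (y i) ≤ L := fun i =>
    hi₁ ▸ Finset.le_sup (f := fun i => (G i).dist (x i) (y i)) (Finset.mem_univ i)
  have hL : 2 ≤ L := by
    obtain ⟨p₀, -⟩ := (hS i₀).1 (x i₀) (y i₀)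
    exact (two_le_dist_of_not_reflGen ⟨p₀⟩ hi₀).trans (hdL i₀)
  choose f hf0 hfL hf hfS using fun i => (hS i).exists_isLazyWalk (hG i) (x i) (y i) hL (hdL i)
  obtain ⟨p, hpL, hpF⟩ :=
    ((isLazyWalk_strongProdPi_iff G (F := fun j i => f i j)).2 hf).exists_walk
  have hx : (fun i => f i 0) = x := funext hf0
  have hy : (fun i => f i L) = y := funext hfL
  refine ⟨p.copy hx hy, le_antisymm ?_ (dist_le _), fun v hv hvS => ?_⟩
  · calc (p.copy hx hy).length ≤ L := by rwa [Walk.length_copy]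
      _ ≤ _ := dist_le_dist_strongProdPi G ⟨p.copy hx hy⟩ i₁
  · rw [Walk.support_copy] at hv
    obtain ⟨j, hj, rfl⟩ := hpF v hv
    obtain ⟨i, hi⟩ := hvS
    rcases Nat.eq_zero_or_pos j with rfl | hj0
    · exact Or.inl hx
    rcases hj.eq_or_lt with rfl | hjL
    · exact Or.inr hy
    · exact absurd hi (hfS i j hj0 hjL)

end StrongProdPi

theorem stmt_9_general {k : ℕ} {V : Fin k → Type*} [∀ i, Fintype (V i)]
    (G : ∀ i, SimpleGraph (V i))
    (hnc : ∀ i, G i ≠ ⊤)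
    (hf : ∀ i, ∃ S : Set (V i), IsFeasibleTMVSet (G i) S ∧ S.ncard = muT (G i)) :
    (∏ i, Fintype.card (V i)) - ∏ i, (Fintype.card (V i) - muT (G i))
      ≤ muT (strongProdPi G) := by
  choose S hS hScard using hf
  calc _ = {x : ∀ i, V i | ∃ i, x i ∈ S i}.ncard := by simp only [ncard_setOf_exists_mem, hScard]
    _ ≤ _ := (isTMVSet_strongProdPi G hS hnc).ncard_le_muT

theorem stmt_9 {k : ℕ} (hk : 2 ≤ k) {V : Fin k → Type*} [∀ i, Fintype (V i)]
    (G : ∀ i, SimpleGraph (V i)) (hconn : ∀ i, (G i).Connected)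
    (hnc : ∀ i, G i ≠ ⊤)
    (hf : ∀ i, ∃ S : Set (V i), IsFeasibleTMVSet (G i) S ∧ S.ncard = muT (G i)) :
    (∏ i, Fintype.card (V i)) - ∏ i, (Fintype.card (V i) - muT (G i))
      ≤ muT (strongProdPi G) :=
  stmt_9_general G hnc hf
end

section
/- Let G be a finite connected simple graph with μ(G) = μt(G) that admits a feasible maximum total mutual-visibility set. Then μ(G ⊠ P_2) ≥ μ(G) + n(G). -/
open SimpleGraph

/-!
Put a copy of `V(G)` on layer `0` and a maximum total mutual-visibility set `S` of `G` on
layer `1` of `G ⊠ P₂`. Distances in `G ⊠ P₂` are at least the distances of the projections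
to `G`, so a shortest `S`-avoiding path of `G`, lifted with its ends on any prescribed layers
and its interior on layer `1`, is a shortest path of `G ⊠ P₂` avoiding this set. Hence the set
is even a total mutual-visibility set of `G ⊠ P₂`, of size `n(G) + μt(G)`.
-/

open Set

namespace SimpleGraph

variable {V W : Type*} {G : SimpleGraph V} {H : SimpleGraph W}

lemma Walk.exists_walk_length_le_of_eq_or_adj {f : V → W}
    (hf : ∀ ⦃a b⦄, G.Adj a b → f a = f b ∨ H.Adj (f a) (f b)) {x y : V} :
    ∀ p : G.Walk x y, ∃ q : H.Walk (f x) (f y), q.length ≤ p.length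
  | .nil => ⟨.nil, le_rfl⟩
  | .cons h p => by
      obtain ⟨q, hq⟩ := exists_walk_length_le_of_eq_or_adj hf p
      rcases hf h with heq | hadj
      · exact ⟨q.copy heq.symm rfl, by simp only [Walk.length_copy, Walk.length_cons]; omega⟩
      · exact ⟨.cons hadj q, by simpa using hq⟩

lemma Reachable.dist_le_of_eq_or_adj {f : V → W}
    (hf : ∀ ⦃a b⦄, G.Adj a b → f a = f b ∨ H.Adj (f a) (f b)) {x y : V}
    (hr : G.Reachable x y) : H.dist (f x) (f y) ≤ G.dist x y := by
  obtain ⟨p, hp⟩ := hr.exists_walk_length_eq_dist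
  obtain ⟨q, hq⟩ := p.exists_walk_length_le_of_eq_or_adj hf
  exact (dist_le q).trans (hq.trans hp.le)

lemma pathGraph_two_eq_or_adj (i j : Fin 2) : i = j ∨ (pathGraph 2).Adj i j := by
  fin_cases i <;> fin_cases j <;> simp [pathGraph_adj]

end SimpleGraph

section StrongProd

variable {V W : Type*} {G : SimpleGraph V} {H : SimpleGraph W}

lemma strongProd_adj_fst ⦃x y : V × W⦄ (h : (strongProd G H).Adj x y) :
    x.1 = y.1 ∨ G.Adj x.1 y.1 := by
  rcases h with ⟨h, -⟩ | ⟨h, -⟩ | ⟨h, -⟩ <;> tauto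

lemma dist_fst_le_dist_strongProd {x y : V × W} (hr : (strongProd G H).Reachable x y) :
    G.dist x.1 y.1 ≤ (strongProd G H).dist x y :=
  hr.dist_le_of_eq_or_adj strongProd_adj_fst

lemma SimpleGraph.Walk.length_eq_dist_strongProd {x y : V × W} (p : (strongProd G H).Walk x y)
    (hp : p.length ≤ G.dist x.1 y.1) : p.length = (strongProd G H).dist x y :=
  le_antisymm (hp.trans (dist_fst_le_dist_strongProd ⟨p⟩)) (dist_le p)

def strongProdLift (ℓ : V → W)
    (hℓ : ∀ ⦃a b⦄, G.Adj a b → ℓ a = ℓ b ∨ H.Adj (ℓ a) (ℓ b)) :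
    G →g strongProd G H where
  toFun a := (a, ℓ a)
  map_rel' {a b} h := by
    rcases hℓ h with heq | hadj
    · exact Or.inl ⟨h, heq⟩
    · exact Or.inr (Or.inr ⟨h, hadj⟩)

@[simp]
lemma strongProdLift_apply (ℓ : V → W)
    (hℓ : ∀ ⦃a b⦄, G.Adj a b → ℓ a = ℓ b ∨ H.Adj (ℓ a) (ℓ b)) (a : V) :
    strongProdLift ℓ hℓ a = (a, ℓ a) :=
  rfl

end StrongProd

section Visibility

variable {V : Type*} {G : SimpleGraph V}

lemma visible_self (X : Set V) (x : V) : Visible G X x x :=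
  ⟨.nil, by simp, by simp⟩

lemma visible_of_adj (X : Set V) {x y : V} (h : G.Adj x y) : Visible G X x y :=
  ⟨h.toWalk, by simp [dist_eq_one_iff_adj.2 h], by simp⟩

lemma IsTMVSet.isMVSet {X : Set V} (hX : IsTMVSet G X) : IsMVSet G X :=
  fun x _ y _ => hX x y

lemma IsMVSet.ncard_le_mu [Finite V] {X : Set V} (hX : IsMVSet G X) : X.ncard ≤ mu G :=
  le_csSup ⟨Nat.card V, by rintro n ⟨Y, -, rfl⟩; exact ncard_le_card Y⟩ ⟨X, hX, rfl⟩

lemma IsTMVSet.visible_strongProd_pathGraph_two {S : Set V} (hS : IsTMVSet G S) {g g' : V}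
    (hne : g ≠ g') (i j : Fin 2) :
    Visible (strongProd G (pathGraph 2)) (univ ×ˢ {0} ∪ S ×ˢ {1}) (g, i) (g', j) := by
  classical
  obtain ⟨q, hq, hqS⟩ := hS g g'
  let ℓ : V → Fin 2 := fun v => if v = g then i else if v = g' then j else 1
  let φ := strongProdLift (G := G) (H := pathGraph 2) ℓ fun a b _ =>
    pathGraph_two_eq_or_adj (ℓ a) (ℓ b)
  have hg : ℓ g = i := if_pos rfl
  have hg' : ℓ g' = j := by simp [ℓ, hne.symm]
  suffices Visible (strongProd G (pathGraph 2)) (univ ×ˢ {0} ∪ S ×ˢ {1}) (φ g) (φ g') by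
    rwa [strongProdLift_apply, strongProdLift_apply, hg, hg'] at this
  refine ⟨q.map φ, (q.map φ).length_eq_dist_strongProd (by rw [Walk.length_map, hq]; rfl), ?_⟩
  intro v hv hvX
  rw [Walk.support_map, List.mem_map] at hv
  obtain ⟨u, hu, rfl⟩ := hv
  by_cases hug : u = g
  · exact Or.inl (by simp [hug])
  by_cases hug' : u = g'
  · exact Or.inr (by simp [hug'])
  have hℓu : ℓ u = 1 := by simp [ℓ, hug, hug']
  have huS : u ∈ S := by simpa [φ, hℓu] using hvX
  exact absurd (hqS u hu huS) (by tauto)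

lemma IsTMVSet.strongProd_pathGraph_two {S : Set V} (hS : IsTMVSet G S) :
    IsTMVSet (strongProd G (pathGraph 2)) (univ ×ˢ {0} ∪ S ×ˢ {1}) := by
  rintro ⟨g, i⟩ ⟨g', j⟩
  rcases eq_or_ne g g' with rfl | hne
  · rcases pathGraph_two_eq_or_adj i j with rfl | hij
    · exact visible_self _ _
    · exact visible_of_adj _ (Or.inr (Or.inl ⟨rfl, hij⟩))
  · exact hS.visible_strongProd_pathGraph_two hne i j

lemma ncard_univ_prod_zero_union_prod_one [Finite V] (S : Set V) :
    ((univ : Set V) ×ˢ {(0 : Fin 2)} ∪ S ×ˢ {1}).ncard = Nat.card V + S.ncard := by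
  rw [ncard_union_eq (disjoint_prod.2 (Or.inr (by simp))), ncard_prod, ncard_prod]
  simp

end Visibility

theorem stmt_14_general {V : Type*} [Fintype V] (G : SimpleGraph V)
    (heq : mu G = muT G)
    (hf : ∃ S : Set V, IsFeasibleTMVSet G S ∧ S.ncard = muT G) :
    mu G + Fintype.card V ≤ mu (strongProd G (SimpleGraph.pathGraph 2)) := by
  obtain ⟨S, ⟨hS, -⟩, hcard⟩ := hf
  calc mu G + Fintype.card V = ((univ : Set V) ×ˢ {(0 : Fin 2)} ∪ S ×ˢ {1}).ncard := by
        rw [ncard_univ_prod_zero_union_prod_one, heq, ← hcard, Nat.card_eq_fintype_card, add_comm]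
    _ ≤ _ := hS.strongProd_pathGraph_two.isMVSet.ncard_le_mu

theorem stmt_14 {V : Type*} [Fintype V] (G : SimpleGraph V) (hG : G.Connected)
    (heq : mu G = muT G)
    (hf : ∃ S : Set V, IsFeasibleTMVSet G S ∧ S.ncard = muT G) :
    mu G + Fintype.card V ≤ mu (strongProd G (SimpleGraph.pathGraph 2)) :=
  stmt_14_general G heq hf
end

section
/- Let G be a finite connected simple graph and let x be a cut vertex of G. Then there exists a maximum mutual-visibility set S of the strong prism G ⊠ P_2 that contains at most one of the two copies of x (i.e., at most one of the vertices (x,p), (x,q), where p, q are the two vertices of P_2). -/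
open SimpleGraph

/-!
If a maximum mutual-visibility set `S` of `G ⊠ P₂` contains both copies of the cut vertex `x`,
then the remaining vertices of `S` project into a single component of `G - x`: a shortest path
between two vertices over different components of `G - x` projects onto a walk through `x`, so it
passes through a copy of `x`. Let `b` be a neighbour of `x` in another component `C`. Since
shortest paths of `G` between vertices outside `C` never enter `C`, replacing `(x, 1)` by `(b, 1)`
keeps `S` a mutual-visibility set of the same size: old pairs keep their shortest paths, and `(b, 1)`
sees every vertex of `S` through the edge to `(x, 1)` followed by a shortest path from `(x, 1)`.
-/

section

variable {V W : Type*} {G : SimpleGraph V}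

theorem Visible.symm {X : Set V} {a b : V} (h : Visible G X a b) : Visible G X b a := by
  obtain ⟨p, hp, hint⟩ := h
  refine ⟨p.reverse, by rw [Walk.length_reverse, dist_comm, hp], fun v hv hvX => ?_⟩
  rw [Walk.support_reverse, List.mem_reverse] at hv
  exact (hint v hv hvX).symm

theorem exists_isMVSet_ncard_eq_mu [Finite V] (G : SimpleGraph V) :
    ∃ S : Set V, IsMVSet G S ∧ S.ncard = mu G := by
  have hbdd : BddAbove {n | ∃ X : Set V, IsMVSet G X ∧ X.ncard = n} :=
    ⟨Nat.card V, by rintro _ ⟨X, -, rfl⟩; exact Set.ncard_le_card X⟩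
  refine Nat.sSup_mem ?_ hbdd
  exact ⟨0, ∅, fun _ h => h.elim, Set.ncard_empty V⟩

namespace SimpleGraph

theorem Walk.mem_support_of_length_le_one {u v w : V} (p : G.Walk u v) (hp : p.length ≤ 1)
    (hw : w ∈ p.support) : w = u ∨ w = v := by
  cases p with
  | nil => simpa using hw
  | cons h q =>
    cases q with
    | nil => simpa using hw
    | cons h' q => simp at hp

theorem Walk.dist_add_dist_le_length {u v w : V} (p : G.Walk u v)
    (hw : w ∈ p.support) : G.dist u w + G.dist w v ≤ p.length := by
  classical
  calc G.dist u w + G.dist w v ≤ (p.takeUntil w hw).length + (p.dropUntil w hw).length :=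
        add_le_add (dist_le _) (dist_le _)
    _ = p.length := by rw [← Walk.length_append, Walk.take_spec]

/-- `u` and `v` lie in the same component of `G - x`; this is reachability in
`G.induce {x}ᶜ`, phrased without subtypes. -/
def ReachableAvoiding (G : SimpleGraph V) (x u v : V) : Prop :=
  ∃ p : G.Walk u v, x ∉ p.support

variable {x u v w : V}

namespace ReachableAvoiding

theorem refl (hu : u ≠ x) : G.ReachableAvoiding x u u :=
  ⟨.nil, by simpa [eq_comm] using hu⟩

theorem symm (h : G.ReachableAvoiding x u v) : G.ReachableAvoiding x v u := by
  obtain ⟨p, hp⟩ := h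
  exact ⟨p.reverse, by simpa using hp⟩

theorem trans (h₁ : G.ReachableAvoiding x u v) (h₂ : G.ReachableAvoiding x v w) :
    G.ReachableAvoiding x u w := by
  obtain ⟨p, hp⟩ := h₁
  obtain ⟨q, hq⟩ := h₂
  exact ⟨p.append q, by simp [Walk.mem_support_append_iff, hp, hq]⟩

theorem ne_left (h : G.ReachableAvoiding x u v) : u ≠ x := by
  obtain ⟨p, hp⟩ := h
  rintro rfl
  exact hp p.start_mem_support

theorem ne_right (h : G.ReachableAvoiding x u v) : v ≠ x :=
  h.symm.ne_left

theorem reachable_induce (h : G.ReachableAvoiding x u v) :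
    (G.induce {x}ᶜ).Reachable ⟨u, h.ne_left⟩ ⟨v, h.ne_right⟩ := by
  obtain ⟨p, hp⟩ := h
  exact ⟨p.induce {x}ᶜ fun y hy hyx => hp (hyx ▸ hy)⟩

end ReachableAvoiding

theorem exists_not_reachableAvoiding_of_isCutVertex (hx : IsCutVertex G x) :
    ∃ a b, a ≠ x ∧ b ≠ x ∧ ¬ G.ReachableAvoiding x a b := by
  by_contra! h
  exact hx fun ⟨a, ha⟩ ⟨b, hb⟩ => (h a b ha hb).reachable_induce

theorem Connected.exists_adj_reachableAvoiding (hG : G.Connected) (hv : v ≠ x) :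
    ∃ b, G.Adj b x ∧ G.ReachableAvoiding x b v := by
  obtain ⟨p, hp⟩ := hG.exists_isPath x v
  cases p with
  | nil => exact absurd rfl hv
  | cons h q => exact ⟨_, h.symm, q, ((Walk.cons_isPath_iff h q).1 hp).2⟩

theorem Connected.dist_eq_add_of_not_reachableAvoiding (hG : G.Connected)
    (h : ¬ G.ReachableAvoiding x u v) : G.dist u v = G.dist u x + G.dist x v := by
  obtain ⟨p, hp⟩ := hG.exists_walk_length_eq_dist u v
  have hxp : x ∈ p.support := by
    by_contra hxp
    exact h ⟨p, hxp⟩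
  exact le_antisymm hG.dist_triangle (hp ▸ p.dist_add_dist_le_length hxp)

/-- A vertex `w ≠ x` separated by `x` from both ends of a shortest path is not on it:
going through `x` twice, the path would be longer than the detour `u → x → v`. -/
theorem Connected.notMem_support_of_length_eq_dist (hG : G.Connected) {p : G.Walk u v}
    (hp : p.length = G.dist u v) (hw : w ≠ x) (hwu : ¬ G.ReachableAvoiding x w u)
    (hwv : ¬ G.ReachableAvoiding x w v) : w ∉ p.support := by
  intro hwp
  have hlen := hp ▸ p.dist_add_dist_le_length hwp
  rw [hG.dist_eq_add_of_not_reachableAvoiding (fun h => hwu h.symm),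
    hG.dist_eq_add_of_not_reachableAvoiding hwv, dist_comm (u := w)] at hlen
  have hxw := hG.pos_dist_of_ne hw.symm
  have := hG.dist_triangle (u := u) (v := x) (w := v)
  omega

end SimpleGraph

section StrongProduct

variable {K : SimpleGraph W}

theorem exists_strongProd_walk_length_eq {u v : V} {i j : W} (q : G.Walk u v)
    (hq : q.length ≠ 0) (hij : i = j ∨ K.Adj i j) :
    ∃ p : (strongProd G K).Walk (u, i) (v, j), p.length = q.length := by
  cases q with
  | nil => exact absurd rfl hq
  | @cons _ w _ h q =>
    let layer : G →g strongProd G K := ⟨fun u => (u, j), fun h => Or.inl ⟨h, rfl⟩⟩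
    have hstep : (strongProd G K).Adj (u, i) (layer w) := by
      rcases hij with rfl | hij
      exacts [Or.inl ⟨h, rfl⟩, Or.inr (Or.inr ⟨h, hij⟩)]
    exact ⟨.cons hstep (q.map layer), by simp⟩

theorem exists_walk_fst_of_strongProd_walk {a b : V × W} (p : (strongProd G K).Walk a b) :
    ∃ q : G.Walk a.1 b.1, q.length ≤ p.length ∧
      ∀ v, v ∈ q.support ↔ ∃ k, (v, k) ∈ p.support := by
  induction p with
  | nil => exact ⟨.nil, le_rfl, fun v => by simp [Prod.ext_iff, eq_comm]⟩
  | @cons a c b h p ih =>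
    obtain ⟨q, hlen, hsupp⟩ := ih
    have hac : G.Adj a.1 c.1 ∨ a.1 = c.1 := by
      rcases h with ⟨h, -⟩ | ⟨h, -⟩ | ⟨h, -⟩
      exacts [Or.inl h, Or.inr h, Or.inl h]
    rcases hac with hac | hac
    · refine ⟨.cons hac q, by simpa using hlen, fun v => ?_⟩
      simp [hsupp, Prod.ext_iff, exists_or]
    · refine ⟨q.copy hac.symm rfl, by simp; omega, fun v => ?_⟩
      simp only [Walk.support_copy, Walk.support_cons, List.mem_cons, exists_or, hsupp,
        Prod.ext_iff, exists_and_left, exists_eq, and_true]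
      refine (or_iff_right_of_imp fun hva => ⟨c.2, ?_⟩).symm
      rw [hva, hac]
      exact p.start_mem_support

theorem SimpleGraph.Connected.dist_strongProd (hG : G.Connected) {u v : V} (huv : u ≠ v)
    {i j : W} (hij : i = j ∨ K.Adj i j) :
    (strongProd G K).dist (u, i) (v, j) = G.dist u v := by
  obtain ⟨q, hq⟩ := hG.exists_walk_length_eq_dist u v
  obtain ⟨p, hp⟩ :=
    exists_strongProd_walk_length_eq q (fun h => huv (Walk.eq_of_length_eq_zero h)) hij
  refine le_antisymm (hq ▸ hp ▸ dist_le p) ?_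
  obtain ⟨p', hp'⟩ := p.reachable.exists_walk_length_eq_dist
  obtain ⟨q', hq', -⟩ := exists_walk_fst_of_strongProd_walk p'
  exact (dist_le q').trans (hq'.trans hp'.le)

theorem exists_mem_support_of_not_reachableAvoiding {x : V} {z w : V × W}
    (h : ¬ G.ReachableAvoiding x z.1 w.1) (p : (strongProd G K).Walk z w) :
    ∃ k, (x, k) ∈ p.support := by
  obtain ⟨q, -, hq⟩ := exists_walk_fst_of_strongProd_walk p
  by_contra hx
  exact h ⟨q, fun hxq => hx ((hq x).1 hxq)⟩

theorem exists_adj_forall_not_reachableAvoiding (hG : G.Connected) {x : V}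
    (hx : IsCutVertex G x) {S : Set (V × W)} (hS : IsMVSet (strongProd G K) S)
    (hxS : ∀ k, (x, k) ∈ S) : ∃ b, G.Adj b x ∧ ∀ z ∈ S, ¬ G.ReachableAvoiding x b z.1 := by
  obtain ⟨a, c, hax, hcx, hac⟩ := exists_not_reachableAvoiding_of_isCutVertex hx
  have hside : (∀ z ∈ S, ¬ G.ReachableAvoiding x a z.1) ∨
      ∀ z ∈ S, ¬ G.ReachableAvoiding x c z.1 := by
    by_contra! ⟨⟨z, hz, haz⟩, ⟨w, hw, hcw⟩⟩
    obtain ⟨p, -, hint⟩ := hS z hz w hw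
    obtain ⟨k, hk⟩ := exists_mem_support_of_not_reachableAvoiding
      (fun hzw => hac (haz.trans (hzw.trans hcw.symm))) p
    rcases hint _ hk (hxS k) with h | h
    · exact haz.ne_right (congrArg Prod.fst h).symm
    · exact hcw.ne_right (congrArg Prod.fst h).symm
  obtain ⟨d, hdx, hd⟩ : ∃ d, d ≠ x ∧ ∀ z ∈ S, ¬ G.ReachableAvoiding x d z.1 :=
    hside.elim (⟨a, hax, ·⟩) (⟨c, hcx, ·⟩)
  obtain ⟨b, hbx, hbd⟩ := hG.exists_adj_reachableAvoiding hdx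
  exact ⟨b, hbx, fun z hz hbz => hd z hz (hbd.symm.trans hbz)⟩

end StrongProduct

theorem eq_or_top_adj (i j : W) : i = j ∨ (⊤ : SimpleGraph W).Adj i j :=
  (em _).imp_right (top_adj i j).2

theorem SimpleGraph.Connected.notMem_support_of_length_eq_dist_strongProd (hG : G.Connected)
    {x b : V} {z w : V × W} {p : (strongProd G ⊤).Walk z w}
    (hp : p.length = (strongProd G ⊤).dist z w) (hb : b ≠ x)
    (hbz : ¬ G.ReachableAvoiding x b z.1) (hbw : ¬ G.ReachableAvoiding x b w.1) (k : W) :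
    (b, k) ∉ p.support := by
  intro hbp
  by_cases hzw : z.1 = w.1
  · have hle : p.length ≤ 1 := by
      rw [hp]
      rcases eq_or_ne z w with rfl | hne
      · simp
      · have hk : z.2 ≠ w.2 := fun h => hne (Prod.ext hzw h)
        exact (dist_eq_one_iff_adj.2 (Or.inr (Or.inl ⟨hzw, (top_adj _ _).2 hk⟩))).le
    rcases p.mem_support_of_length_le_one hle hbp with rfl | rfl
    · exact hbz (.refl hb)
    · exact hbw (.refl hb)
  · obtain ⟨q, hq, hsupp⟩ := exists_walk_fst_of_strongProd_walk p
    have hqd : q.length = G.dist z.1 w.1 := by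
      refine le_antisymm (hq.trans ?_) (dist_le q)
      rw [hp, ← hG.dist_strongProd hzw (eq_or_top_adj z.2 w.2)]
    exact hG.notMem_support_of_length_eq_dist hqd hb hbz hbw ((hsupp b).2 ⟨k, hbp⟩)

theorem SimpleGraph.Connected.isMVSet_insert_diff_strongProd (hG : G.Connected)
    {S : Set (V × W)} (hS : IsMVSet (strongProd G ⊤) S) {x b : V} {k : W} (hxS : (x, k) ∈ S)
    (hbx : G.Adj b x) (hbS : ∀ z ∈ S, ¬ G.ReachableAvoiding x b z.1) :
    IsMVSet (strongProd G ⊤) (insert (b, k) (S \ {(x, k)})) := by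
  set H := strongProd G (⊤ : SimpleGraph W)
  have hb : b ≠ x := hbx.ne
  have old : ∀ z ∈ S \ {(x, k)}, ∀ w ∈ S \ {(x, k)},
      Visible H (insert (b, k) (S \ {(x, k)})) z w := by
    intro z hz w hw
    obtain ⟨p, hp, hint⟩ := hS z hz.1 w hw.1
    refine ⟨p, hp, fun v hv hvS => ?_⟩
    rcases hvS with rfl | hvS
    · exact absurd hv (hG.notMem_support_of_length_eq_dist_strongProd hp hb
        (hbS z hz.1) (hbS w hw.1) k)
    · exact hint v hv hvS.1
  have new : ∀ w ∈ S \ {(x, k)}, Visible H (insert (b, k) (S \ {(x, k)})) (b, k) w := by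
    intro w hw
    by_cases hwx : w.1 = x
    · have hadj : H.Adj (b, k) w := by
        rcases eq_or_top_adj k w.2 with h | h
        · exact Or.inl ⟨hwx ▸ hbx, h⟩
        · exact Or.inr (Or.inr ⟨hwx ▸ hbx, h⟩)
      refine ⟨hadj.toWalk, by simp [dist_eq_one_iff_adj.2 hadj], fun v hv _ => ?_⟩
      simpa using hv
    · obtain ⟨P, hP, hint⟩ := hS (x, k) hxS w hw.1
      have hstep : H.Adj (b, k) (x, k) := Or.inl ⟨hbx, rfl⟩
      have hbw : b ≠ w.1 := fun h => hbS w hw.1 (h ▸ .refl hb)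
      refine ⟨.cons hstep P, ?_, fun v hv hvS => ?_⟩
      · rw [Walk.length_cons, hP, hG.dist_strongProd (Ne.symm hwx) (eq_or_top_adj k w.2),
          hG.dist_strongProd hbw (eq_or_top_adj k w.2),
          hG.dist_eq_add_of_not_reachableAvoiding (hbS w hw.1), dist_eq_one_iff_adj.2 hbx,
          add_comm]
      · rw [Walk.support_cons, List.mem_cons] at hv
        rcases hv with rfl | hv
        · exact Or.inl rfl
        rcases hvS with rfl | hvS
        · exact absurd hv (hG.notMem_support_of_length_eq_dist_strongProd hP hb
            (fun h => h.ne_right rfl) (hbS w hw.1) k)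
        rcases hint v hv hvS.1 with rfl | rfl
        · exact absurd rfl hvS.2
        · exact Or.inr rfl
  intro z hz w hw
  rcases hz with rfl | hz <;> rcases hw with rfl | hw
  · exact ⟨.nil, by simp, fun v hv _ => Or.inl (by simpa using hv)⟩
  · exact new w hw
  · exact (new z hz).symm
  · exact old z hz w hw

end

theorem stmt_15 {V : Type*} [Fintype V] (G : SimpleGraph V) (hG : G.Connected)
    (x : V) (hx : IsCutVertex G x) :
    ∃ S : Set (V × Fin 2), IsMVSet (strongProd G (SimpleGraph.pathGraph 2)) S ∧
      S.ncard = mu (strongProd G (SimpleGraph.pathGraph 2)) ∧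
      ¬ ((x, 0) ∈ S ∧ (x, 1) ∈ S) := by
  rw [pathGraph_two_eq_top]
  obtain ⟨S, hS, hcard⟩ := exists_isMVSet_ncard_eq_mu (strongProd G (⊤ : SimpleGraph (Fin 2)))
  by_cases hxS : (x, 0) ∈ S ∧ (x, 1) ∈ S
  · obtain ⟨b, hbx, hbS⟩ :=
      exists_adj_forall_not_reachableAvoiding hG hx hS (Fin.forall_fin_two.2 hxS)
    have hbS' : (b, 1) ∉ S := fun hb => hbS _ hb (.refl hbx.ne)
    refine ⟨insert (b, 1) (S \ {(x, 1)}), hG.isMVSet_insert_diff_strongProd hS hxS.2 hbx hbS,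
      ?_, fun h => ?_⟩
    · rw [Set.ncard_insert_of_notMem (fun h => hbS' h.1), Set.ncard_sdiff_singleton_add_one hxS.2,
        hcard]
    · simpa [hbx.ne.symm] using h.2
  · exact ⟨S, hS, hcard, hxS⟩
end
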